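/- arXiv:1904.11609 — 6 statements merged into one kernel-verified Lean document; each statement's English description precedes it below -/
import Mathlib

section
/- Consider the two-level hierarchical model y | w ∼ f₁(y|w) and w | θ ∼ f₂(w|θ), where the top-level conditional density f₁(y|w) > 0 (with respect to a σ-finite measure μ) does not depend on θ ∈ Θ ⊆ ℝ open, and f₂(w|θ) > 0 is a family of probability densities (with respect to a σ-finite measure ν) such that θ ↦ log f₂(w|θ) is twice differentiable. Let f(y|θ) = ∫ f₁(y|w) f₂(w|θ) dν(w) be the marginal density and f(w|y,θ) = f₁(y|w) f₂(w|θ)/f(y|θ) the complete conditional. Assume differentiation under the integral sign is valid and all relevant negative second log-derivatives are integrable. Then I_y(θ) = I_w(θ) − E_y[I_w(θ|y)], where I_y(θ) = ∫ (−∂²/∂θ² log f(y|θ)) f(y|θ) dμ, I_w(θ) = ∫ (−∂²/∂θ² log f₂(w|θ)) f₂(w|θ) dν, and E_y[I_w(θ|y)] = ∫ (∫ (−∂²/∂θ² log f(w|y,θ)) f(w|y,θ) dν(w)) f(y|θ) dμ(y). In particular, if moreover E_y[I_w(θ|y)] ≥ 0 and I_y(θ) ≥ 0 for all θ ∈ Θ,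 then 0 ≤ I_y(θ) ≤ I_w(θ), and if the Jeffreys prior θ ↦ √(I_w(θ)) of the latent-variable model is integrable over Θ, then the Jeffreys prior θ ↦ √(I_y(θ)) of the marginal model is also integrable over Θ. -/
/-!
Write `H(p) = -∂²_θ log p`. On `Θ` the complete conditional satisfies
`log f(w|y,θ) = log f₁(y|w) + log f₂(w|θ) - log f(y|θ)`, so `H(f(w|y,θ)) = H(f₂(w|θ)) - H(f(y|θ))`.
Integrating this against the joint density `f₁ f₂` over `μ × ν` (Fubini, using `∫ f₁ dμ = 1` and
`∫ f₁ f₂ dν = f(y|θ)`) gives `E_y[I_w(θ|y)] = I_w - I_y`. The identity for `log f(w|y,θ)` needs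
`f(y|θ) > 0` near `θ`, which is not automatic: the Bochner integral defining the marginal is `0`
where `f₁ f₂` is not integrable. The bounds follow at once, and `√I_y ≤ √I_w` transfers
integrability once `θ ↦ I_y(θ)` is known to be measurable, which comes from the joint
measurability of the marginal and of its log-derivatives on `Θ × Y`.
-/

open MeasureTheory Filter Set
open scoped ENNReal Topology

noncomputable def fisherInfo {X : Type*} [MeasurableSpace X] (p : ℝ → X → ℝ) (μ : Measure X)
    (θ : ℝ) : ℝ :=
  ∫ x, (-(deriv (deriv fun t => Real.log (p t x)) θ)) * p θ x ∂μ

lemma continuousOn_of_continuousOn_log {f : ℝ → ℝ} {s : Set ℝ} (hpos : ∀ t ∈ s, 0 < f t)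
    (h : ContinuousOn (fun t => Real.log (f t)) s) : ContinuousOn f s :=
  (Real.continuous_exp.comp_continuousOn h).congr fun t ht => (Real.exp_log (hpos t ht)).symm

lemma deriv_deriv_log_mul_div {f g : ℝ → ℝ} {a θ : ℝ} (ha : 0 < a)
    (hpos : ∀ᶠ t in 𝓝 θ, 0 < f t ∧ 0 < g t)
    (hdiff : ∀ᶠ t in 𝓝 θ, DifferentiableAt ℝ (fun t => Real.log (f t)) t ∧
      DifferentiableAt ℝ (fun t => Real.log (g t)) t)
    (hf : DifferentiableAt ℝ (deriv fun t => Real.log (f t)) θ)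
    (hg : DifferentiableAt ℝ (deriv fun t => Real.log (g t)) θ) :
    deriv (deriv fun t => Real.log (a * f t / g t)) θ
      = deriv (deriv fun t => Real.log (f t)) θ - deriv (deriv fun t => Real.log (g t)) θ := by
  have hlog : (fun t => Real.log (a * f t / g t))
      =ᶠ[𝓝 θ] fun t => Real.log a + (Real.log (f t) - Real.log (g t)) := by
    filter_upwards [hpos] with t ⟨hft, hgt⟩
    rw [Real.log_div (mul_pos ha hft).ne' hgt.ne', Real.log_mul ha.ne' hft.ne']
    ring
  have hderiv : deriv (fun t => Real.log (a * f t / g t))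
      =ᶠ[𝓝 θ] fun t => deriv (fun t => Real.log (f t)) t - deriv (fun t => Real.log (g t)) t := by
    filter_upwards [hlog.eventuallyEq_nhds, hdiff] with t ht ⟨hft, hgt⟩
    rw [ht.deriv_eq, deriv_const_add, deriv_fun_sub hft hgt]
  rw [hderiv.deriv_eq]
  exact deriv_sub hf hg

section Measurability

variable {α : Type*} [MeasurableSpace α] {s : Set ℝ}

lemma measurable_indicator_of_continuousOn (hs : MeasurableSet s) {u : ℝ → α → ℝ}
    (hu_cont : ∀ x, ContinuousOn (fun t => u t x) s) (hu_meas : ∀ t, Measurable (u t)) :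
    Measurable fun p : ℝ × α => s.indicator (fun t => u t p.2) p.1 := by
  classical
  have hv : Measurable fun q : s × α => u q.1 q.2 :=
    measurable_uncurry_of_continuous_of_measurable (u := fun (t : s) x => u t x)
      (fun x => (hu_cont x).domRestrict) fun t => hu_meas t
  convert Measurable.dite (s := {p : ℝ × α | p.1 ∈ s})
    (f := fun q => u q.1.1 q.1.2) (g := fun _ => (0 : ℝ))
    (hv.comp (((measurable_fst.comp measurable_subtype_coe).subtype_mk (h := fun q => q.2)).prodMk
      (measurable_snd.comp measurable_subtype_coe))) measurable_const (measurable_fst hs) using 1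
  funext p
  by_cases hp : p.1 ∈ s <;> simp [hp]

lemma measurable_indicator_deriv (hs : IsOpen s) {u : ℝ → α → ℝ}
    (hu : Measurable fun p : ℝ × α => s.indicator (fun t => u t p.2) p.1)
    (hd : ∀ x, ∀ t ∈ s, DifferentiableAt ℝ (fun t => u t x) t) :
    Measurable fun p : ℝ × α => s.indicator (fun t => deriv (fun t => u t p.2) t) p.1 := by
  set ũ := fun p : ℝ × α => s.indicator (fun t => u t p.2) p.1
  set h : ℕ → ℝ := fun n => 1 / ((n : ℝ) + 1)
  refine measurable_of_tendsto_metrizable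
    (f := fun n p => s.indicator (fun t => slope (fun τ => ũ (τ, p.2)) t (t + h n)) p.1)
    (fun n => Measurable.indicator ?_ (measurable_fst hs.measurableSet))
    (tendsto_pi_nhds.2 fun p => ?_)
  · simp only [slope_def_field, add_sub_cancel_left]
    exact ((hu.comp ((measurable_fst.add_const _).prodMk measurable_snd)).sub hu).div_const _
  obtain ⟨t, x⟩ := p
  by_cases ht : t ∈ s
  · have hth₀ : Tendsto (fun n => t + h n) atTop (𝓝 t) := by
      simpa [h] using (tendsto_const_nhds (x := t)).add
        (tendsto_one_div_add_atTop_nhds_zero_nat (𝕜 := ℝ))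
    have hth : Tendsto (fun n => t + h n) atTop (𝓝[≠] t) :=
      tendsto_nhdsWithin_iff.2 ⟨hth₀, Eventually.of_forall fun n => by
        simp only [h, one_div, mem_compl_iff, mem_singleton_iff, add_eq_left, inv_eq_zero]
        positivity⟩
    have hslope := (hasDerivAt_iff_tendsto_slope.1 (hd x t ht).hasDerivAt).comp hth
    simp only [indicator_of_mem ht]
    refine hslope.congr' ?_
    filter_upwards [hth₀.eventually (hs.mem_nhds ht)] with n hn
    simp [ũ, slope_def_field, indicator_of_mem ht, indicator_of_mem hn]
  · simp [ht]

lemma measurable_indicator_integral_mul {W : Type*} [MeasurableSpace W] {ν : Measure W}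
    [SFinite ν] {f : α → W → ℝ} (hf : Measurable fun z : α × W => f z.1 z.2) {u : ℝ → W → ℝ}
    (hu : Measurable fun q : ℝ × W => s.indicator (fun t => u t q.2) q.1) :
    Measurable fun p : ℝ × α => s.indicator (fun t => ∫ w, f p.2 w * u t w ∂ν) p.1 := by
  have hprod : Measurable fun q : (ℝ × α) × W =>
      f q.1.2 q.2 * s.indicator (fun t => u t q.2) q.1.1 :=
    (hf.comp ((measurable_snd.comp measurable_fst).prodMk measurable_snd)).mul
      (hu.comp ((measurable_fst.comp measurable_fst).prodMk measurable_snd))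
  convert (hprod.stronglyMeasurable.integral_prod_right' (ν := ν)).measurable using 1
  funext p
  by_cases hp : p.1 ∈ s <;> simp [hp]

lemma aestronglyMeasurable_fisherInfo {μ : Measure α} [SFinite μ] (hs : IsOpen s)
    {p : ℝ → α → ℝ} (hp : Measurable fun q : ℝ × α => s.indicator (fun t => p t q.2) q.1)
    (hd : ∀ x, ∀ t ∈ s, DifferentiableAt ℝ (fun t => Real.log (p t x)) t ∧
      DifferentiableAt ℝ (deriv fun t => Real.log (p t x)) t) :
    AEStronglyMeasurable (fisherInfo p μ) (volume.restrict s) := by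
  have hlog : Measurable fun q : ℝ × α => s.indicator (fun t => Real.log (p t q.2)) q.1 := by
    convert Real.measurable_log.comp hp using 2 with q
    by_cases hq : q.1 ∈ s <;> simp [hq]
  have hd₁ := measurable_indicator_deriv hs hlog fun x t ht => (hd x t ht).1
  have hd₂ := measurable_indicator_deriv hs hd₁ fun x t ht => (hd x t ht).2
  refine ((hd₂.neg.mul hp).stronglyMeasurable.integral_prod_right' (ν := μ)).aestronglyMeasurable
    |>.congr ?_
  filter_upwards [ae_restrict_mem hs.measurableSet] with θ hθ
  simp [fisherInfo, indicator_of_mem hθ]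

end Measurability

section Integrals

variable {W : Type*} [MeasurableSpace W] {ν : Measure W}

lemma lintegral_ofReal_ne_top_of_tendsto {g : ℝ → W → ℝ} {t : ℕ → ℝ} {t₀ : ℝ}
    (ht : Tendsto t atTop (𝓝 t₀)) (hg_meas : ∀ n, AEStronglyMeasurable (g (t n)) ν)
    (hg_nonneg : ∀ n, 0 ≤ᵐ[ν] g (t n)) (hg_cont : ∀ w, ContinuousAt (fun s => g s w) t₀)
    (hg_fin : ∀ n, ∫⁻ w, ENNReal.ofReal (g (t n) w) ∂ν ≠ ∞)
    (hlog : ContinuousAt (fun s => Real.log (∫ w, g s w ∂ν)) t₀) :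
    ∫⁻ w, ENNReal.ofReal (g t₀ w) ∂ν ≠ ∞ := by
  set E : ℝ → ℝ≥0∞ := fun s => ENNReal.ofReal (Real.exp (Real.log (∫ w, g s w ∂ν)))
  have hE : Tendsto (fun n => E (t n)) atTop (𝓝 (E t₀)) :=
    ENNReal.tendsto_ofReal ((Real.continuous_exp.tendsto _).comp (hlog.tendsto.comp ht))
  -- Fatou along `t n`, then `x ≤ exp (log x)` (true for every real `x`, junk value included).
  have hle : ∫⁻ w, ENNReal.ofReal (g t₀ w) ∂ν ≤ E t₀ := calc
    ∫⁻ w, ENNReal.ofReal (g t₀ w) ∂ν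
        = ∫⁻ w, liminf (fun n => ENNReal.ofReal (g (t n) w)) atTop ∂ν :=
      lintegral_congr fun w =>
        ((ENNReal.tendsto_ofReal ((hg_cont w).tendsto.comp ht)).liminf_eq).symm
    _ ≤ liminf (fun n => ∫⁻ w, ENNReal.ofReal (g (t n) w) ∂ν) atTop :=
      lintegral_liminf_le' fun n => (hg_meas n).aemeasurable.ennreal_ofReal
    _ = liminf (fun n => ENNReal.ofReal (∫ w, g (t n) w ∂ν)) atTop := by
      congr 1; funext n
      rw [integral_eq_lintegral_of_nonneg_ae (hg_nonneg n) (hg_meas n),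
        ENNReal.ofReal_toReal (hg_fin n)]
    _ ≤ liminf (fun n => E (t n)) atTop :=
      liminf_le_liminf (Eventually.of_forall fun n =>
        ENNReal.ofReal_le_ofReal (Real.le_exp_log _))
    _ = E t₀ := hE.liminf_eq
  exact ne_top_of_le_ne_top ENNReal.ofReal_ne_top hle

lemma integral_pos_of_lintegral_ne_top {g : W → ℝ} (hg : ∀ w, 0 < g w)
    (hg_meas : AEStronglyMeasurable g ν) (hν : ν ≠ 0)
    (hg_fin : ∫⁻ w, ENNReal.ofReal (g w) ∂ν ≠ ∞) : 0 < ∫ w, g w ∂ν := by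
  have hint : Integrable g ν :=
    ⟨hg_meas, (hasFiniteIntegral_iff_ofReal (ae_of_all _ fun w => (hg w).le)).2 hg_fin.lt_top⟩
  rw [integral_pos_iff_support_of_nonneg (fun w => (hg w).le) hint,
    show Function.support g = univ from eq_univ_of_forall fun w => (hg w).ne']
  exact Measure.measure_univ_pos.2 hν

lemma integral_eq_one_of_lintegral_ofReal {g : W → ℝ} (hg : 0 ≤ᵐ[ν] g)
    (hg_meas : AEStronglyMeasurable g ν) (h : ∫⁻ w, ENNReal.ofReal (g w) ∂ν = 1) :
    ∫ w, g w ∂ν = 1 := by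
  rw [integral_eq_lintegral_of_nonneg_ae hg hg_meas, h, ENNReal.toReal_one]

variable {Y : Type*} [MeasurableSpace Y] {μ : Measure Y}

lemma lintegral_lintegral_ofReal_mul [SFinite μ] [SFinite ν] {f : Y → W → ℝ}
    (hf : Measurable fun z : Y × W => f z.1 z.2) (hf_nonneg : ∀ y w, 0 ≤ f y w)
    (hf_one : ∀ w, ∫⁻ y, ENNReal.ofReal (f y w) ∂μ = 1) {p : W → ℝ} (hp : Measurable p) :
    ∫⁻ y, ∫⁻ w, ENNReal.ofReal (f y w * p w) ∂ν ∂μ = ∫⁻ w, ENNReal.ofReal (p w) ∂ν := by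
  rw [lintegral_lintegral_swap (hf.mul (hp.comp measurable_snd)).ennreal_ofReal.aemeasurable]
  refine lintegral_congr fun w => ?_
  simp_rw [ENNReal.ofReal_mul (hf_nonneg _ w)]
  rw [lintegral_mul_const' _ _ ENNReal.ofReal_ne_top, hf_one, one_mul]

end Integrals

section HierarchicalModel

variable {Y W : Type*} [MeasurableSpace Y] [MeasurableSpace W] {μ : Measure Y} {ν : Measure W}
  [SFinite μ] [SFinite ν] {Θ : Set ℝ} {f₁ : Y → W → ℝ} {f₂ : ℝ → W → ℝ}

/-- Tonelli gives finiteness of `∫⁻ f₁ f₂ dν` for a.e. `y` simultaneously at the countably many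
rational parameters; Fatou and the continuity of the log-marginal propagate it to all of `Θ`. -/
lemma ae_forall_integral_mul_pos (hΘ : IsOpen Θ) (hf₁meas : Measurable fun z : Y × W => f₁ z.1 z.2)
    (hf₂meas : ∀ θ, Measurable (f₂ θ)) (hf₁pos : ∀ y w, 0 < f₁ y w)
    (hf₂pos : ∀ θ ∈ Θ, ∀ w, 0 < f₂ θ w) (hf₁prob : ∀ w, ∫⁻ y, ENNReal.ofReal (f₁ y w) ∂μ = 1)
    (hf₂prob : ∀ θ ∈ Θ, ∫⁻ w, ENNReal.ofReal (f₂ θ w) ∂ν = 1)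
    (hf₂cont : ∀ w, ContinuousOn (fun t => f₂ t w) Θ)
    (hlog : ∀ y, ContinuousOn (fun t => Real.log (∫ w, f₁ y w * f₂ t w ∂ν)) Θ) :
    ∀ᵐ y ∂μ, ∀ t ∈ Θ, 0 < ∫ w, f₁ y w * f₂ t w ∂ν := by
  have hmeas : ∀ t y, Measurable fun w => f₁ y w * f₂ t w := fun t y =>
    (hf₁meas.comp (measurable_const.prodMk measurable_id)).mul (hf₂meas t)
  have hfin : ∀ t ∈ Θ, ∀ᵐ y ∂μ, ∫⁻ w, ENNReal.ofReal (f₁ y w * f₂ t w) ∂ν ≠ ∞ := by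
    intro t ht
    have hjoint : Measurable fun z : Y × W => ENNReal.ofReal (f₁ z.1 z.2 * f₂ t z.2) :=
      (hf₁meas.mul ((hf₂meas t).comp measurable_snd)).ennreal_ofReal
    refine ae_lt_top hjoint.lintegral_prod_right' ?_ |>.mono fun _ => ne_of_lt
    rw [lintegral_lintegral_ofReal_mul hf₁meas (fun y w => (hf₁pos y w).le) hf₁prob (hf₂meas t),
      hf₂prob t ht]
    exact ENNReal.one_ne_top
  have hD : (Θ ∩ range ((↑) : ℚ → ℝ)).Countable := (countable_range _).mono inter_subset_right
  filter_upwards [(ae_ball_iff hD).2 fun t ht => hfin t ht.1] with y hy t ht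
  have hν : ν ≠ 0 := fun h => by simpa [h] using hf₂prob t ht
  obtain ⟨q, hqD, hq⟩ := mem_closure_iff_seq_limit.1
    (Dense.open_subset_closure_inter Rat.denseRange_cast hΘ ht)
  refine integral_pos_of_lintegral_ne_top (fun w => mul_pos (hf₁pos y w) (hf₂pos t ht w))
    (hmeas t y).aestronglyMeasurable hν ?_
  exact lintegral_ofReal_ne_top_of_tendsto hq (fun n => (hmeas _ y).aestronglyMeasurable)
    (fun n => ae_of_all _ fun w => (mul_pos (hf₁pos y w) (hf₂pos _ (hqD n).1 w)).le)
    (fun w => continuousAt_const.mul ((hf₂cont w).continuousAt (hΘ.mem_nhds ht)))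
    (fun n => hy _ (hqD n)) ((hlog y).continuousAt (hΘ.mem_nhds ht))

theorem fisherInfo_marginal_eq_sub (hΘ : IsOpen Θ) {fY : ℝ → Y → ℝ}
    (hfY : ∀ θ y, fY θ y = ∫ w, f₁ y w * f₂ θ w ∂ν) (hfYpos : ∀ᵐ y ∂μ, ∀ t ∈ Θ, 0 < fY t y)
    (hf₁pos : ∀ y w, 0 < f₁ y w) (hf₂pos : ∀ θ ∈ Θ, ∀ w, 0 < f₂ θ w)
    (hf₁one : ∀ w, ∫ y, f₁ y w ∂μ = 1)
    (hf₂diff : ∀ w, ∀ θ ∈ Θ, DifferentiableAt ℝ (fun t => Real.log (f₂ t w)) θ ∧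
        DifferentiableAt ℝ (deriv fun t => Real.log (f₂ t w)) θ)
    (hfYdiff : ∀ y, ∀ θ ∈ Θ, DifferentiableAt ℝ (fun t => Real.log (fY t y)) θ ∧
        DifferentiableAt ℝ (deriv fun t => Real.log (fY t y)) θ)
    {θ : ℝ} (hθ : θ ∈ Θ)
    (hint_w : Integrable (fun z : Y × W =>
        (-(deriv (deriv fun t => Real.log (f₂ t z.2)) θ)) * (f₁ z.1 z.2 * f₂ θ z.2)) (μ.prod ν))
    (hint_y : Integrable (fun z : Y × W =>
        (-(deriv (deriv fun t => Real.log (fY t z.1)) θ)) * (f₁ z.1 z.2 * f₂ θ z.2)) (μ.prod ν))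
    (hint_wy : Integrable (fun z : Y × W =>
        (-(deriv (deriv fun t => Real.log (f₁ z.1 z.2 * f₂ t z.2 / fY t z.1)) θ))
          * (f₁ z.1 z.2 * f₂ θ z.2)) (μ.prod ν)) :
    fisherInfo fY μ θ = fisherInfo f₂ ν θ
      - ∫ y, fisherInfo (fun t w => f₁ y w * f₂ t w / fY t y) ν θ * fY θ y ∂μ := by
  have hlatent : ∫ z : Y × W, (-(deriv (deriv fun t => Real.log (f₂ t z.2)) θ))
      * (f₁ z.1 z.2 * f₂ θ z.2) ∂μ.prod ν = fisherInfo f₂ ν θ := by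
    rw [integral_prod_symm _ hint_w]
    refine integral_congr_ae (ae_of_all _ fun w => ?_)
    simp only [integral_const_mul, integral_mul_const, hf₁one, one_mul]
  have hmarginal : ∫ z : Y × W, (-(deriv (deriv fun t => Real.log (fY t z.1)) θ))
      * (f₁ z.1 z.2 * f₂ θ z.2) ∂μ.prod ν = fisherInfo fY μ θ := by
    rw [integral_prod _ hint_y]
    refine integral_congr_ae (ae_of_all _ fun y => ?_)
    simp only [integral_const_mul, hfY]
  have hconditional : ∫ y, fisherInfo (fun t w => f₁ y w * f₂ t w / fY t y) ν θ * fY θ y ∂μ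
      = ∫ z : Y × W, (-(deriv (deriv fun t => Real.log (f₁ z.1 z.2 * f₂ t z.2 / fY t z.1)) θ))
          * (f₁ z.1 z.2 * f₂ θ z.2) ∂μ.prod ν := by
    rw [integral_prod _ hint_wy]
    refine integral_congr_ae ?_
    filter_upwards [hfYpos] with y hy
    simp only [fisherInfo, mul_div_assoc', integral_div]
    exact div_mul_cancel₀ _ (hy θ hθ).ne'
  have hsplit : ∀ᵐ z ∂μ.prod ν,
      (-(deriv (deriv fun t => Real.log (f₁ z.1 z.2 * f₂ t z.2 / fY t z.1)) θ))
          * (f₁ z.1 z.2 * f₂ θ z.2)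
        = (-(deriv (deriv fun t => Real.log (f₂ t z.2)) θ)) * (f₁ z.1 z.2 * f₂ θ z.2)
          - (-(deriv (deriv fun t => Real.log (fY t z.1)) θ)) * (f₁ z.1 z.2 * f₂ θ z.2) := by
    filter_upwards [Measure.quasiMeasurePreserving_fst.ae hfYpos] with ⟨y, w⟩ hy
    have hnhds := hΘ.mem_nhds hθ
    rw [deriv_deriv_log_mul_div (hf₁pos y w)
      (eventually_of_mem hnhds fun t ht => ⟨hf₂pos t ht w, hy t ht⟩)
      (eventually_of_mem hnhds fun t ht => ⟨(hf₂diff w t ht).1, (hfYdiff y t ht).1⟩)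
      (hf₂diff w θ hθ).2 (hfYdiff y θ hθ).2]
    ring
  rw [hconditional, integral_congr_ae hsplit, integral_sub hint_w hint_y, hlatent, hmarginal]
  ring

end HierarchicalModel

/-- Two-level hierarchical model `y | w ∼ f₁(y|w)`, `w | θ ∼ f₂(w|θ)`, where the top-level
conditional density `f₁` does not depend on `θ`. With marginal `fY(θ, y) = ∫ f₁ f₂ dν`,
complete conditional `f(w|y,θ) = f₁ f₂ / fY`, Fisher informations
`Iy θ = ∫ (−∂²_θ log fY) fY dμ`, `Iw θ = ∫ (−∂²_θ log f₂) f₂ dν` and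
`Ewy θ = E_y[I_w(θ|y)]`, one has `Iy = Iw − Ewy` on `Θ`; in particular, if moreover
`Ewy ≥ 0` and `Iy ≥ 0` on `Θ`, then `0 ≤ Iy ≤ Iw` on `Θ`, and if the Jeffreys prior
`√Iw` of the latent-variable model is integrable over `Θ` then so is the Jeffreys
prior `√Iy` of the marginal model. -/
theorem hierarchical_fisher_corollary
    {Y W : Type*} [MeasurableSpace Y] [MeasurableSpace W]
    (μ : Measure Y) (ν : Measure W) [SigmaFinite μ] [SigmaFinite ν]
    (Θ : Set ℝ) (hΘ : IsOpen Θ)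
    (f₁ : Y → W → ℝ) (f₂ : ℝ → W → ℝ)
    (hf₁meas : Measurable (fun z : Y × W => f₁ z.1 z.2))
    (hf₂meas : ∀ θ, Measurable (f₂ θ))
    (hf₁pos : ∀ y w, 0 < f₁ y w)
    (hf₂pos : ∀ θ ∈ Θ, ∀ w, 0 < f₂ θ w)
    (hf₁prob : ∀ w, ∫⁻ y, ENNReal.ofReal (f₁ y w) ∂μ = 1)
    (hf₂prob : ∀ θ ∈ Θ, ∫⁻ w, ENNReal.ofReal (f₂ θ w) ∂ν = 1)
    (hf₂diff : ∀ w, ∀ θ ∈ Θ, DifferentiableAt ℝ (fun t => Real.log (f₂ t w)) θ ∧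
        DifferentiableAt ℝ (deriv fun t => Real.log (f₂ t w)) θ)
    (fY : ℝ → Y → ℝ) (hfY : ∀ θ y, fY θ y = ∫ w, f₁ y w * f₂ θ w ∂ν)
    (hfYdiff : ∀ y, ∀ θ ∈ Θ, DifferentiableAt ℝ (fun t => Real.log (fY t y)) θ ∧
        DifferentiableAt ℝ (deriv fun t => Real.log (fY t y)) θ)
    (Iy Iw Ewy : ℝ → ℝ)
    (hIy : ∀ θ, Iy θ = ∫ y, (-(deriv (deriv fun t => Real.log (fY t y)) θ)) * fY θ y ∂μ)
    (hIw : ∀ θ, Iw θ = ∫ w, (-(deriv (deriv fun t => Real.log (f₂ t w)) θ)) * f₂ θ w ∂ν)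
    (hEwy : ∀ θ, Ewy θ = ∫ y, (∫ w,
        (-(deriv (deriv fun t => Real.log (f₁ y w * f₂ t w / fY t y)) θ))
          * (f₁ y w * f₂ θ w / fY θ y) ∂ν) * fY θ y ∂μ)
    -- integrability (validity of the interchanges of integrals)
    (hint_w : ∀ θ ∈ Θ, Integrable (fun z : Y × W =>
        (-(deriv (deriv fun t => Real.log (f₂ t z.2)) θ)) * (f₁ z.1 z.2 * f₂ θ z.2)) (μ.prod ν))
    (hint_y : ∀ θ ∈ Θ, Integrable (fun z : Y × W =>
        (-(deriv (deriv fun t => Real.log (fY t z.1)) θ)) * (f₁ z.1 z.2 * f₂ θ z.2)) (μ.prod ν))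
    (hint_wy : ∀ θ ∈ Θ, Integrable (fun z : Y × W =>
        (-(deriv (deriv fun t => Real.log (f₁ z.1 z.2 * f₂ t z.2 / fY t z.1)) θ))
          * (f₁ z.1 z.2 * f₂ θ z.2)) (μ.prod ν)) :
    (∀ θ ∈ Θ, Iy θ = Iw θ - Ewy θ)
    ∧ ((∀ θ ∈ Θ, 0 ≤ Ewy θ) → (∀ θ ∈ Θ, 0 ≤ Iy θ) →
        (∀ θ ∈ Θ, 0 ≤ Iy θ ∧ Iy θ ≤ Iw θ)
        ∧ (IntegrableOn (fun θ => Real.sqrt (Iw θ)) Θ volume →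
            IntegrableOn (fun θ => Real.sqrt (Iy θ)) Θ volume)) := by
  obtain rfl : Iy = fisherInfo fY μ := funext hIy
  obtain rfl : Iw = fisherInfo f₂ ν := funext hIw
  have hf₂cont (w : W) : ContinuousOn (fun t => f₂ t w) Θ :=
    continuousOn_of_continuousOn_log (fun t ht => hf₂pos t ht w)
      (continuousOn_of_forall_continuousAt fun t ht => (hf₂diff w t ht).1.continuousAt)
  have hlogY (y : Y) : ContinuousOn (fun t => Real.log (fY t y)) Θ :=
    continuousOn_of_forall_continuousAt fun t ht => (hfYdiff y t ht).1.continuousAt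
  have hfYpos : ∀ᵐ y ∂μ, ∀ t ∈ Θ, 0 < fY t y := by
    simp only [hfY] at hlogY ⊢
    exact ae_forall_integral_mul_pos hΘ hf₁meas hf₂meas hf₁pos hf₂pos hf₁prob hf₂prob hf₂cont hlogY
  have hf₁one (w : W) : ∫ y, f₁ y w ∂μ = 1 :=
    integral_eq_one_of_lintegral_ofReal (ae_of_all _ fun y => (hf₁pos y w).le)
      (hf₁meas.comp (measurable_id.prodMk measurable_const)).aestronglyMeasurable (hf₁prob w)
  have hdecomp (θ : ℝ) (hθ : θ ∈ Θ) : fisherInfo fY μ θ = fisherInfo f₂ ν θ - Ewy θ := by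
    rw [hEwy]
    exact fisherInfo_marginal_eq_sub hΘ hfY hfYpos hf₁pos hf₂pos hf₁one hf₂diff hfYdiff hθ
      (hint_w θ hθ) (hint_y θ hθ) (hint_wy θ hθ)
  refine ⟨hdecomp, fun hEwy_nonneg hIy_nonneg => ?_⟩
  have hbound (θ : ℝ) (hθ : θ ∈ Θ) :
      0 ≤ fisherInfo fY μ θ ∧ fisherInfo fY μ θ ≤ fisherInfo f₂ ν θ :=
    ⟨hIy_nonneg θ hθ, by linarith [hdecomp θ hθ, hEwy_nonneg θ hθ]⟩
  have hfY_meas : Measurable fun q : ℝ × Y => Θ.indicator (fun t => fY t q.2) q.1 := by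
    simp only [hfY]
    exact measurable_indicator_integral_mul hf₁meas
      (measurable_indicator_of_continuousOn hΘ.measurableSet hf₂cont hf₂meas)
  refine ⟨hbound, fun hIw_int => hIw_int.mono'
    (Real.continuous_sqrt.comp_aestronglyMeasurable
      (aestronglyMeasurable_fisherInfo hΘ hfY_meas hfYdiff)) ?_⟩
  filter_upwards [ae_restrict_mem hΘ.measurableSet] with θ hθ
  rw [Real.norm_of_nonneg (Real.sqrt_nonneg _)]
  exact Real.sqrt_le_sqrt (hbound θ hθ).2
end

section
/- Let n ≥ 2 and let A and B be n × n real symmetric positive semi-definite matrices. Then det(A + B)^{1/2} ≥ det(A)^{1/2} + det(B)^{1/2}. -/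
open Matrix

/-!
If `det (A + B) = 0`, a kernel vector `x` of `A + B` has `xᵀAx + xᵀBx = 0`, so it lies in the
kernels of `A` and `B` and all three determinants vanish. Otherwise conjugating by
`(A + B)^(-1/2)` scales every square root of a determinant by the same factor and reduces
the claim to `A + B = 1`. Then `A` and `1 - A` have eigenvalues `λᵢ` and `1 - λᵢ` in `[0, 1]`;
dropping all but two factors of each product and applying AM–GM to each square root gives
`√(λ₁λ₂) + √((1 - λ₁)(1 - λ₂)) ≤ (λ₁ + λ₂)/2 + (2 - λ₁ - λ₂)/2 = 1`.
-/

lemma Real.sqrt_mul_add_sqrt_one_sub_mul_one_sub_le_one {a b : ℝ} (ha₀ : 0 ≤ a) (ha₁ : a ≤ 1)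
    (hb₀ : 0 ≤ b) (hb₁ : b ≤ 1) : √(a * b) + √((1 - a) * (1 - b)) ≤ 1 := by
  have amgm {x y : ℝ} (hx : 0 ≤ x) (hy : 0 ≤ y) : √(x * y) ≤ (x + y) / 2 :=
    Real.sqrt_le_iff.2 ⟨by positivity, by nlinarith [sq_nonneg (x - y)]⟩
  linarith [amgm ha₀ hb₀, amgm (sub_nonneg.2 ha₁) (sub_nonneg.2 hb₁)]

lemma Finset.prod_le_mul_of_le_one {ι R : Type*} [Fintype ι] [CommSemiring R] [PartialOrder R]
    [IsOrderedRing R] {f : ι → R} (hf₀ : ∀ k, 0 ≤ f k) (hf₁ : ∀ k, f k ≤ 1) {i j : ι}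
    (hij : i ≠ j) :
    ∏ k, f k ≤ f i * f j := by
  classical
  simpa [Finset.prod_pair hij] using
    Finset.prod_le_prod_of_subset_of_le_one (Finset.subset_univ {i, j}) (fun k _ => hf₀ k)
      (fun k _ _ => hf₁ k)

lemma Real.sqrt_prod_add_sqrt_prod_one_sub_le_one {ι : Type*} [Fintype ι] [Nontrivial ι]
    {t : ι → ℝ} (ht₀ : ∀ i, 0 ≤ t i) (ht₁ : ∀ i, t i ≤ 1) :
    √(∏ i, t i) + √(∏ i, (1 - t i)) ≤ 1 := by
  obtain ⟨i, j, hij⟩ := exists_pair_ne ι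
  calc √(∏ i, t i) + √(∏ i, (1 - t i))
      ≤ √(t i * t j) + √((1 - t i) * (1 - t j)) := by
        gcongr
        · exact Finset.prod_le_mul_of_le_one ht₀ ht₁ hij
        · exact Finset.prod_le_mul_of_le_one (fun k => sub_nonneg.2 (ht₁ k))
            (fun k => sub_le_self _ (ht₀ k)) hij
    _ ≤ 1 := sqrt_mul_add_sqrt_one_sub_mul_one_sub_le_one (ht₀ i) (ht₁ i) (ht₀ j) (ht₁ j)

namespace Matrix

variable {ι : Type*} [Fintype ι] [DecidableEq ι]

lemma IsHermitian.det_one_sub {A : Matrix ι ι ℝ} (hA : A.IsHermitian) :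
    (1 - A).det = ∏ i, (1 - hA.eigenvalues i) := by
  rw [← (scalar ι).map_one, ← eval_charpoly, hA.charpoly_eq]
  simp [Polynomial.eval_prod]

lemma IsHermitian.eigenvalues_le_one {A : Matrix ι ι ℝ} (hA : A.IsHermitian)
    (h : (1 - A).PosSemidef) (i : ι) : hA.eigenvalues i ≤ 1 := by
  have := h.re_dotProduct_nonneg (hA.eigenvectorBasis i)
  rw [sub_mulVec, dotProduct_sub, one_mulVec, map_sub, ← hA.eigenvalues_eq] at this
  have hv : (hA.eigenvectorBasis i).ofLp ⬝ᵥ (hA.eigenvectorBasis i).ofLp = 1 := by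
    have := real_inner_self_eq_norm_sq (hA.eigenvectorBasis i)
    rw [hA.eigenvectorBasis.orthonormal.1 i, EuclideanSpace.inner_eq_star_dotProduct] at this
    simpa using this
  simpa [hv] using this

lemma PosSemidef.sqrt_det_add_sqrt_det_le_one [Nontrivial ι] {A B : Matrix ι ι ℝ}
    (hA : A.PosSemidef) (hB : B.PosSemidef) (hAB : A + B = 1) : √A.det + √B.det ≤ 1 := by
  obtain rfl : B = 1 - A := eq_sub_of_add_eq' hAB
  rw [hA.isHermitian.det_eq_prod_eigenvalues, hA.isHermitian.det_one_sub]
  simpa using Real.sqrt_prod_add_sqrt_prod_one_sub_le_one hA.eigenvalues_nonneg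
    (hA.isHermitian.eigenvalues_le_one hB)

lemma PosSemidef.det_eq_zero_of_det_add_eq_zero {A B : Matrix ι ι ℝ} (hA : A.PosSemidef)
    (hB : B.PosSemidef) (hAB : (A + B).det = 0) : A.det = 0 := by
  obtain ⟨x, hx, hABx⟩ := exists_mulVec_eq_zero_iff.2 hAB
  have hsum : star x ⬝ᵥ A *ᵥ x + star x ⬝ᵥ B *ᵥ x = 0 := by
    rw [← dotProduct_add, ← add_mulVec, hABx, dotProduct_zero]
  have hAx : star x ⬝ᵥ A *ᵥ x = 0 := by
    linarith [hA.dotProduct_mulVec_nonneg x, hB.dotProduct_mulVec_nonneg x]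
  exact exists_mulVec_eq_zero_iff.1 ⟨x, hx, (hA.dotProduct_mulVec_zero_iff x).1 hAx⟩

-- Also true for singular `S`, where `S⁻¹ = 0`.
lemma sqrt_det_inv_mul_mul_inv (S A : Matrix ι ι ℝ) :
    √(S⁻¹ * A * S⁻¹).det = √A.det / |S.det| := by
  rw [det_mul, det_mul, det_nonsing_inv, Ring.inverse_eq_inv,
    show S.det⁻¹ * A.det * S.det⁻¹ = A.det * S.det⁻¹ ^ 2 by ring,
    Real.sqrt_mul' _ (sq_nonneg _), Real.sqrt_sq_eq_abs, abs_inv, div_eq_mul_inv]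

open scoped MatrixOrder in
lemma PosSemidef.sqrt_det_add_sqrt_det_le [Nontrivial ι] {A B : Matrix ι ι ℝ}
    (hA : A.PosSemidef) (hB : B.PosSemidef) : √A.det + √B.det ≤ √(A + B).det := by
  rcases eq_or_ne (A + B).det 0 with hAB | hAB
  · rw [hAB, hA.det_eq_zero_of_det_add_eq_zero hB hAB,
      hB.det_eq_zero_of_det_add_eq_zero hA (add_comm A B ▸ hAB)]
    simp
  set S := CFC.sqrt (A + B)
  have hS : S.PosSemidef := (CFC.sqrt_nonneg _).posSemidef
  have hSdet : S.det = √(A + B).det := by simpa using (hA.add hB).det_sqrt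
  have hSdet_pos : 0 < S.det := by
    rw [hSdet]; exact Real.sqrt_pos.2 ((hA.add hB).det_nonneg.lt_of_ne' hAB)
  have hSS : S * S = A + B := CFC.sqrt_mul_sqrt_self _ (hA.add hB).nonneg
  have hconj {C : Matrix ι ι ℝ} (hC : C.PosSemidef) : (S⁻¹ * C * S⁻¹).PosSemidef := by
    simpa only [hS.isHermitian.inv.eq] using hC.conjTranspose_mul_mul_same S⁻¹
  have hsum : S⁻¹ * A * S⁻¹ + S⁻¹ * B * S⁻¹ = 1 := by
    rw [← add_mul, ← mul_add, ← hSS, ← mul_assoc, nonsing_inv_mul _ hSdet_pos.ne'.isUnit, one_mul,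
      mul_nonsing_inv _ hSdet_pos.ne'.isUnit]
  have key := (hconj hA).sqrt_det_add_sqrt_det_le_one (hconj hB) hsum
  rwa [sqrt_det_inv_mul_mul_inv, sqrt_det_inv_mul_mul_inv,
    abs_of_pos hSdet_pos, ← add_div, div_le_one hSdet_pos, hSdet] at key

end Matrix

/-- For `n ≥ 2` and real symmetric positive semi-definite `n × n` matrices `A` and `B`,
`det(A + B)^(1/2) ≥ det(A)^(1/2) + det(B)^(1/2)`. -/
theorem sqrt_det_add_ge_add_sqrt_det {n : ℕ} (hn : 2 ≤ n)
    (A B : Matrix (Fin n) (Fin n) ℝ) (hA : A.PosSemidef) (hB : B.PosSemidef) :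
    Real.sqrt ((A + B).det) ≥ Real.sqrt A.det + Real.sqrt B.det := by
  have : Nontrivial (Fin n) := Fin.nontrivial_iff_two_le.2 hn
  exact hA.sqrt_det_add_sqrt_det_le hB
end

section
/- (Minkowski determinant inequality.) Let n ≥ 1 and let A and B be n × n real symmetric positive semi-definite matrices. Then det(A + B)^{1/n} ≥ det(A)^{1/n} + det(B)^{1/n}. -/
/-!
If `A` is positive definite, write `A = S * S` with `S = √A` and `B = S * C * S` with
`C = S⁻¹ * B * S⁻¹ ⪰ 0`; dividing by `det A ^ (1/n)` the inequality becomes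
`1 + det C ^ (1/n) ≤ det (1 + C) ^ (1/n)`. In an eigenbasis of `C` this is superadditivity of the
geometric mean, `(∏ f) ^ (1/n) + (∏ g) ^ (1/n) ≤ (∏ (f + g)) ^ (1/n)`, obtained by adding AM-GM
for `f / (f + g)` and for `g / (f + g)`. If `det A = 0` exchange `A` and `B`; if both
determinants vanish the claim is trivial.
-/

open Finset

namespace Real

variable {ι : Type*} [Fintype ι] [Nonempty ι]

theorem prod_rpow_inv_card_le_sum_div_card {z : ι → ℝ} (hz : ∀ i, 0 ≤ z i) :
    (∏ i, z i) ^ ((1 : ℝ) / Fintype.card ι) ≤ (∑ i, z i) / Fintype.card ι := by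
  have hcard : (0 : ℝ) < Fintype.card ι := by exact_mod_cast Fintype.card_pos
  simpa [one_div] using
    geom_mean_le_arith_mean univ (fun _ ↦ 1) z (fun _ _ ↦ zero_le_one) (by simpa using hcard)
      (fun i _ ↦ hz i)

theorem prod_rpow_add_prod_rpow_le {f g : ι → ℝ} (hf : ∀ i, 0 ≤ f i) (hg : ∀ i, 0 ≤ g i) :
    (∏ i, f i) ^ ((1 : ℝ) / Fintype.card ι) + (∏ i, g i) ^ ((1 : ℝ) / Fintype.card ι) ≤
      (∏ i, (f i + g i)) ^ ((1 : ℝ) / Fintype.card ι) := by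
  set p : ℝ := 1 / Fintype.card ι
  have hcard : (0 : ℝ) < Fintype.card ι := by exact_mod_cast Fintype.card_pos
  have hfg : ∀ i, 0 ≤ f i + g i := fun i ↦ add_nonneg (hf i) (hg i)
  by_cases! hpos : ∀ i, 0 < f i + g i
  · have hprod : 0 < (∏ i, (f i + g i)) ^ p := rpow_pos_of_pos (prod_pos fun i _ ↦ hpos i) p
    have hmean : ∀ z : ι → ℝ, (∀ i, 0 ≤ z i) →
        (∏ i, z i) ^ p / (∏ i, (f i + g i)) ^ p ≤ (∑ i, z i / (f i + g i)) / Fintype.card ι := by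
      intro z hz
      rw [← div_rpow (prod_nonneg fun i _ ↦ hz i) (prod_nonneg fun i _ ↦ hfg i),
        ← prod_div_distrib]
      exact prod_rpow_inv_card_le_sum_div_card fun i ↦ div_nonneg (hz i) (hfg i)
    have hsum : ∑ i, (f i / (f i + g i) + g i / (f i + g i)) = Fintype.card ι := by
      simp [← add_div, div_self (hpos _).ne']
    rw [← div_le_one hprod, add_div]
    calc _ ≤ (∑ i, f i / (f i + g i)) / Fintype.card ι +
          (∑ i, g i / (f i + g i)) / Fintype.card ι := add_le_add (hmean f hf) (hmean g hg)
      _ = 1 := by rw [← add_div, ← sum_add_distrib, hsum, div_self hcard.ne']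
  · obtain ⟨i, hi⟩ := hpos
    have hp : p ≠ 0 := by positivity
    rw [prod_eq_zero (mem_univ i) (by linarith [hf i, hg i]),
      prod_eq_zero (mem_univ i) (by linarith [hf i, hg i]), zero_rpow hp, add_zero]
    exact rpow_nonneg (prod_nonneg fun i _ ↦ hfg i) p

end Real

namespace Matrix

variable {ι : Type*} [Fintype ι] [DecidableEq ι]

theorem IsHermitian.det_one_add {𝕜 : Type*} [RCLike 𝕜] {C : Matrix ι ι 𝕜} (hC : C.IsHermitian) :
    (1 + C).det = ∏ i, (1 + (hC.eigenvalues i : 𝕜)) := by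
  conv_lhs =>
    rw [hC.spectral_theorem, ← map_one (Unitary.conjStarAlgAut 𝕜 _ hC.eigenvectorUnitary),
      ← map_add]
  simp [-Unitary.conjStarAlgAut_apply, ← diagonal_one, diagonal_add]

variable [Nonempty ι]

theorem PosSemidef.one_add_det_rpow_le {C : Matrix ι ι ℝ} (hC : C.PosSemidef) :
    1 + C.det ^ ((1 : ℝ) / Fintype.card ι) ≤ (1 + C).det ^ ((1 : ℝ) / Fintype.card ι) := by
  have h := Real.prod_rpow_add_prod_rpow_le (fun _ ↦ zero_le_one) hC.eigenvalues_nonneg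
  rw [prod_const_one, Real.one_rpow] at h
  simpa [hC.isHermitian.det_eq_prod_eigenvalues, hC.isHermitian.det_one_add] using h

open scoped MatrixOrder in
theorem PosDef.det_rpow_add_le {A B : Matrix ι ι ℝ} (hA : A.PosDef) (hB : B.PosSemidef) :
    A.det ^ ((1 : ℝ) / Fintype.card ι) + B.det ^ ((1 : ℝ) / Fintype.card ι) ≤
      (A + B).det ^ ((1 : ℝ) / Fintype.card ι) := by
  set p : ℝ := 1 / Fintype.card ι
  set S := CFC.sqrt A
  have hSS : S * S = A := CFC.sqrt_mul_sqrt_self A hA.posSemidef.nonneg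
  have hS : IsUnit S := isUnit_of_mul_isUnit_left (hSS ▸ hA.isUnit)
  have hSH : S⁻¹ᴴ = S⁻¹ := by
    rw [conjTranspose_nonsing_inv, (nonneg_iff_posSemidef.mp (CFC.sqrt_nonneg A)).isHermitian.eq]
  set C := S⁻¹ * B * S⁻¹
  have hC : C.PosSemidef := by simpa only [hSH] using hB.mul_mul_conjTranspose_same S⁻¹
  have hB' : B = S * C * S := by
    simp only [C, ← mul_assoc, mul_nonsing_inv _ ((isUnit_iff_isUnit_det S).mp hS), one_mul]
    simp only [mul_assoc, nonsing_inv_mul _ ((isUnit_iff_isUnit_det S).mp hS), mul_one]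
  have hAB : A + B = S * (1 + C) * S := by
    rw [mul_add, add_mul, mul_one, hSS, ← hB']
  have hdet : ∀ X, (S * X * S).det = A.det * X.det := fun X ↦ by
    rw [← hSS, det_mul, det_mul, det_mul]; ring
  have hApos := hA.det_pos.le
  calc A.det ^ p + B.det ^ p = A.det ^ p * (1 + C.det ^ p) := by
        rw [hB', hdet, Real.mul_rpow hApos hC.det_nonneg]; ring
    _ ≤ A.det ^ p * (1 + C).det ^ p := by gcongr; exact hC.one_add_det_rpow_le
    _ = (A + B).det ^ p := by
        rw [hAB, hdet, Real.mul_rpow hApos (PosSemidef.one.add hC).det_nonneg]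

theorem PosSemidef.det_rpow_add_le {A B : Matrix ι ι ℝ} (hA : A.PosSemidef) (hB : B.PosSemidef) :
    A.det ^ ((1 : ℝ) / Fintype.card ι) + B.det ^ ((1 : ℝ) / Fintype.card ι) ≤
      (A + B).det ^ ((1 : ℝ) / Fintype.card ι) := by
  by_cases hdA : A.det = 0
  · by_cases hdB : B.det = 0
    · rw [hdA, hdB, Real.zero_rpow (by positivity), add_zero]
      exact Real.rpow_nonneg (hA.add hB).det_nonneg _
    · simpa only [add_comm] using (hB.posDef_iff_det_ne_zero.mpr hdB).det_rpow_add_le hA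
  · exact (hA.posDef_iff_det_ne_zero.mpr hdA).det_rpow_add_le hB

end Matrix

/-- Minkowski determinant inequality: for `n ≥ 1` and real symmetric positive semi-definite
`n × n` matrices `A` and `B`, `det(A + B)^(1/n) ≥ det(A)^(1/n) + det(B)^(1/n)`. -/
theorem minkowski_det_inequality {n : ℕ} (hn : 1 ≤ n)
    (A B : Matrix (Fin n) (Fin n) ℝ) (hA : A.PosSemidef) (hB : B.PosSemidef) :
    (A + B).det ^ ((1 : ℝ) / n) ≥ A.det ^ ((1 : ℝ) / n) + B.det ^ ((1 : ℝ) / n) := by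
  have : Nonempty (Fin n) := ⟨⟨0, hn⟩⟩
  simpa only [Fintype.card_fin] using hA.det_rpow_add_le hB
end

section
/- Let g₁ and g₂ be probability densities with respect to a σ-finite measure ν on a measurable space Y, and let θ ∈ (0,1). Then the Fisher information of the two-component mixture f(y|θ) = θ g₁(y) + (1−θ) g₂(y) is bounded by the Fisher information 1/(θ(1−θ)) of the Bernoulli latent model: ∫ (g₁(y) − g₂(y))² / (θ g₁(y) + (1−θ) g₂(y)) dν(y) ≤ 1/(θ(1−θ)), where the integrand is taken to be 0 at points where θ g₁(y) + (1−θ) g₂(y) = 0. -/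
/-!
Pointwise, `((1-θ)a + θb)(θa + (1-θ)b) = θ(1-θ)(a-b)² + ab`, so for `a, b ≥ 0` the integrand
`(a-b)²/(θa + (1-θ)b)` is at most `((1-θ)a + θb)/(θ(1-θ))`. The numerator of this bound is the
mixture with the weights swapped, a probability density, so it integrates to `1`.
-/

open MeasureTheory

theorem sq_sub_div_mix_le {a b θ : ℝ} (ha : 0 ≤ a) (hb : 0 ≤ b) (hθ₀ : 0 < θ) (hθ₁ : θ < 1) :
    (a - b) ^ 2 / (θ * a + (1 - θ) * b) ≤ 1 / (θ * (1 - θ)) * ((1 - θ) * a + θ * b) := by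
  have hvar : 0 < θ * (1 - θ) := mul_pos hθ₀ (sub_pos.2 hθ₁)
  have hmix : 0 ≤ θ * a + (1 - θ) * b := by nlinarith
  rcases hmix.eq_or_lt with hzero | hpos
  · rw [← hzero, div_zero]
    exact mul_nonneg (by positivity) (by nlinarith)
  have hprod : (θ * a + (1 - θ) * b) * ((1 - θ) * a + θ * b)
      = (a - b) ^ 2 * (θ * (1 - θ)) + a * b := by
    ring
  rw [div_le_iff₀ hpos, one_div_mul_eq_div, mul_comm, ← mul_div_assoc, le_div_iff₀ hvar, hprod]
  exact le_add_of_nonneg_right (mul_nonneg ha hb)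

theorem lintegral_ofReal_mix {Y : Type*} [MeasurableSpace Y] (ν : Measure Y) {g₁ g₂ : Y → ℝ}
    (hg₁ : Measurable g₁) (hg₁nn : ∀ y, 0 ≤ g₁ y) (hg₂nn : ∀ y, 0 ≤ g₂ y) {s t : ℝ}
    (hs : 0 ≤ s) (ht : 0 ≤ t) :
    ∫⁻ y, ENNReal.ofReal (s * g₁ y + t * g₂ y) ∂ν
      = ENNReal.ofReal s * ∫⁻ y, ENNReal.ofReal (g₁ y) ∂ν
        + ENNReal.ofReal t * ∫⁻ y, ENNReal.ofReal (g₂ y) ∂ν := by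
  have hsplit : ∀ y, ENNReal.ofReal (s * g₁ y + t * g₂ y)
      = ENNReal.ofReal s * ENNReal.ofReal (g₁ y) + ENNReal.ofReal t * ENNReal.ofReal (g₂ y) :=
    fun y => by
      rw [ENNReal.ofReal_add (mul_nonneg hs (hg₁nn y)) (mul_nonneg ht (hg₂nn y)),
        ENNReal.ofReal_mul hs, ENNReal.ofReal_mul ht]
  simp_rw [hsplit]
  rw [lintegral_add_left (hg₁.ennreal_ofReal.const_mul _),
    lintegral_const_mul' _ _ ENNReal.ofReal_ne_top, lintegral_const_mul' _ _ ENNReal.ofReal_ne_top]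

theorem two_component_mixture_info_le_bernoulli_info_general
    {Y : Type*} [MeasurableSpace Y] (ν : Measure Y)
    (g₁ g₂ : Y → ℝ) (hg₁m : Measurable g₁)
    (hg₁nn : ∀ y, 0 ≤ g₁ y) (hg₂nn : ∀ y, 0 ≤ g₂ y)
    (hg₁1 : ∫⁻ y, ENNReal.ofReal (g₁ y) ∂ν = 1)
    (hg₂1 : ∫⁻ y, ENNReal.ofReal (g₂ y) ∂ν = 1)
    {θ : ℝ} (hθ : θ ∈ Set.Ioo (0 : ℝ) 1) :
    ∫⁻ y, ENNReal.ofReal ((g₁ y - g₂ y) ^ 2 / (θ * g₁ y + (1 - θ) * g₂ y)) ∂ν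
      ≤ ENNReal.ofReal (1 / (θ * (1 - θ))) := by
  obtain ⟨hθ₀, hθ₁⟩ := hθ
  have hswapped : ∫⁻ y, ENNReal.ofReal ((1 - θ) * g₁ y + θ * g₂ y) ∂ν = 1 := by
    rw [lintegral_ofReal_mix ν hg₁m hg₁nn hg₂nn (sub_pos.2 hθ₁).le hθ₀.le, hg₁1, hg₂1, mul_one,
      mul_one, ← ENNReal.ofReal_add (sub_pos.2 hθ₁).le hθ₀.le]
    norm_num
  calc ∫⁻ y, ENNReal.ofReal ((g₁ y - g₂ y) ^ 2 / (θ * g₁ y + (1 - θ) * g₂ y)) ∂ν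
      ≤ ∫⁻ y, ENNReal.ofReal (1 / (θ * (1 - θ)) * ((1 - θ) * g₁ y + θ * g₂ y)) ∂ν :=
        lintegral_mono fun y =>
          ENNReal.ofReal_le_ofReal (sq_sub_div_mix_le (hg₁nn y) (hg₂nn y) hθ₀ hθ₁)
    _ = ENNReal.ofReal (1 / (θ * (1 - θ))) := by
        simp_rw [ENNReal.ofReal_mul (one_div_nonneg.2 (mul_pos hθ₀ (sub_pos.2 hθ₁)).le)]
        rw [lintegral_const_mul' _ _ ENNReal.ofReal_ne_top, hswapped, mul_one]

/-- The Fisher information of the two-component mixture `f(y|θ) = θ g₁(y) + (1−θ) g₂(y)`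
is bounded by the Fisher information `1/(θ(1−θ))` of the Bernoulli latent model:
`∫ (g₁ − g₂)² / (θ g₁ + (1−θ) g₂) dν ≤ 1/(θ(1−θ))` (the integrand being `0` where the
denominator vanishes — which is the Lean convention for division by zero). -/
theorem two_component_mixture_info_le_bernoulli_info
    {Y : Type*} [MeasurableSpace Y] (ν : Measure Y) [SigmaFinite ν]
    (g₁ g₂ : Y → ℝ) (hg₁m : Measurable g₁) (hg₂m : Measurable g₂)
    (hg₁nn : ∀ y, 0 ≤ g₁ y) (hg₂nn : ∀ y, 0 ≤ g₂ y)
    (hg₁1 : ∫⁻ y, ENNReal.ofReal (g₁ y) ∂ν = 1)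
    (hg₂1 : ∫⁻ y, ENNReal.ofReal (g₂ y) ∂ν = 1)
    {θ : ℝ} (hθ : θ ∈ Set.Ioo (0 : ℝ) 1) :
    ∫⁻ y, ENNReal.ofReal ((g₁ y - g₂ y) ^ 2 / (θ * g₁ y + (1 - θ) * g₂ y)) ∂ν
      ≤ ENNReal.ofReal (1 / (θ * (1 - θ))) :=
  two_component_mixture_info_le_bernoulli_info_general ν g₁ g₂ hg₁m hg₁nn hg₂nn hg₁1 hg₂1 hθ
end

section
/- Let g₁ and g₂ be probability densities with respect to a σ-finite measure ν on a measurable space Y. Define I_y(θ) = ∫ (g₁(y) − g₂(y))² / (θ g₁(y) + (1−θ) g₂(y)) dν(y) for θ ∈ (0,1) (integrand taken to be 0 where the denominator vanishes). Then the Jeffreys prior of the two-component mixture model is proper: ∫₀¹ √(I_y(θ)) dθ ≤ ∫₀¹ θ^{−1/2}(1−θ)^{−1/2} dθ = π < ∞. -/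
/-!
For `a, b ≥ 0` and `0 < θ < 1`,
`(a/θ + b/(1-θ)) (θa + (1-θ)b) - (a-b)² = ab/(θ(1-θ)) ≥ 0`, so integrating against the two
densities bounds the Fisher information by `1/θ + 1/(1-θ) = 1/(θ(1-θ))`. Its square root is
therefore dominated by the Beta(1/2, 1/2) kernel, whose integral is `B(1/2, 1/2) = Γ(1/2)² = π`.
-/

open MeasureTheory ProbabilityTheory Set

lemma lintegral_Ioo_rpow_mul_one_sub_rpow {α β : ℝ} (hα : 0 < α) (hβ : 0 < β) :
    ∫⁻ x in Ioo (0 : ℝ) 1, ENNReal.ofReal (x ^ (α - 1) * (1 - x) ^ (β - 1))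
      = ENNReal.ofReal (beta α β) := by
  have hB := beta_pos hα hβ
  have h := lintegral_betaPDF_eq_one hα hβ
  simp_rw [lintegral_betaPDF, mul_assoc, ENNReal.ofReal_mul (one_div_pos.2 hB).le] at h
  rw [lintegral_const_mul' _ _ ENNReal.ofReal_ne_top, one_div, ENNReal.ofReal_inv_of_pos hB,
    mul_comm] at h
  rw [ENNReal.eq_inv_of_mul_eq_one_left h, inv_inv]

lemma beta_half_half : beta (1 / 2) (1 / 2) = Real.pi := by
  rw [beta, Real.Gamma_one_half_eq]
  norm_num [Real.mul_self_sqrt Real.pi_pos.le]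

lemma lintegral_Ioo_rpow_neg_half_mul_one_sub_rpow_neg_half :
    ∫⁻ x in Ioo (0 : ℝ) 1, ENNReal.ofReal (x ^ (-(1 : ℝ) / 2) * (1 - x) ^ (-(1 : ℝ) / 2))
      = ENNReal.ofReal Real.pi := by
  have h :=
    lintegral_Ioo_rpow_mul_one_sub_rpow (α := 1 / 2) (β := 1 / 2) one_half_pos one_half_pos
  rwa [beta_half_half, show (1 / 2 : ℝ) - 1 = -1 / 2 by norm_num] at h

lemma sq_sub_div_mixture_le {θ a b : ℝ} (hθ0 : 0 < θ) (hθ1 : θ < 1)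
    (ha : 0 ≤ a) (hb : 0 ≤ b) :
    (a - b) ^ 2 / (θ * a + (1 - θ) * b) ≤ θ⁻¹ * a + (1 - θ)⁻¹ * b := by
  have hθ1' : 0 < 1 - θ := by linarith
  rcases (by positivity : (0 : ℝ) ≤ θ * a + (1 - θ) * b).eq_or_lt with h0 | h0
  · rw [← h0, div_zero]; positivity
  rw [div_le_iff₀ h0]
  have hgap : (θ⁻¹ * a + (1 - θ)⁻¹ * b) * (θ * a + (1 - θ) * b) - (a - b) ^ 2
      = a * b * (θ * (1 - θ))⁻¹ := by
    field_simp; ring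
  nlinarith [mul_nonneg (mul_nonneg ha hb) (inv_nonneg.2 (mul_pos hθ0 hθ1').le)]

lemma lintegral_sq_sub_div_mixture_le {Y : Type*} [MeasurableSpace Y] (ν : Measure Y)
    {g₁ g₂ : Y → ℝ} (hg₁m : Measurable g₁)
    (hg₁nn : ∀ y, 0 ≤ g₁ y) (hg₂nn : ∀ y, 0 ≤ g₂ y)
    {θ : ℝ} (hθ0 : 0 < θ) (hθ1 : θ < 1) :
    ∫⁻ y, ENNReal.ofReal ((g₁ y - g₂ y) ^ 2 / (θ * g₁ y + (1 - θ) * g₂ y)) ∂ν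
      ≤ ENNReal.ofReal θ⁻¹ * ∫⁻ y, ENNReal.ofReal (g₁ y) ∂ν
        + ENNReal.ofReal (1 - θ)⁻¹ * ∫⁻ y, ENNReal.ofReal (g₂ y) ∂ν := by
  have hθ1' : 0 < 1 - θ := by linarith
  calc ∫⁻ y, ENNReal.ofReal ((g₁ y - g₂ y) ^ 2 / (θ * g₁ y + (1 - θ) * g₂ y)) ∂ν
      ≤ ∫⁻ y, (ENNReal.ofReal θ⁻¹ * ENNReal.ofReal (g₁ y)
          + ENNReal.ofReal (1 - θ)⁻¹ * ENNReal.ofReal (g₂ y)) ∂ν := by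
        refine lintegral_mono fun y ↦ ?_
        rw [← ENNReal.ofReal_mul (by positivity), ← ENNReal.ofReal_mul (by positivity),
          ← ENNReal.ofReal_add (by positivity [hg₁nn y]) (by positivity [hg₂nn y])]
        exact ENNReal.ofReal_le_ofReal (sq_sub_div_mixture_le hθ0 hθ1 (hg₁nn y) (hg₂nn y))
    _ = _ := by
        rw [lintegral_add_left (hg₁m.ennreal_ofReal.const_mul _),
          lintegral_const_mul' _ _ ENNReal.ofReal_ne_top,
          lintegral_const_mul' _ _ ENNReal.ofReal_ne_top]

lemma rpow_half_ofReal_inv_add_ofReal_inv_one_sub {θ : ℝ} (hθ0 : 0 < θ) (hθ1 : θ < 1) :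
    (ENNReal.ofReal θ⁻¹ + ENNReal.ofReal (1 - θ)⁻¹) ^ ((1 : ℝ) / 2)
      = ENNReal.ofReal (θ ^ (-(1 : ℝ) / 2) * (1 - θ) ^ (-(1 : ℝ) / 2)) := by
  have hθ1' : 0 < 1 - θ := by linarith
  have hsum : θ⁻¹ + (1 - θ)⁻¹ = (θ * (1 - θ))⁻¹ := by field_simp; ring
  rw [← ENNReal.ofReal_add (by positivity) (by positivity), hsum,
    ENNReal.ofReal_rpow_of_pos (by positivity), Real.inv_rpow (by positivity),
    ← Real.rpow_neg (by positivity), Real.mul_rpow hθ0.le hθ1'.le, neg_div]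

theorem two_component_mixture_jeffreys_proper_general
    {Y : Type*} [MeasurableSpace Y] (ν : Measure Y)
    (g₁ g₂ : Y → ℝ) (hg₁m : Measurable g₁)
    (hg₁nn : ∀ y, 0 ≤ g₁ y) (hg₂nn : ∀ y, 0 ≤ g₂ y)
    (hg₁1 : ∫⁻ y, ENNReal.ofReal (g₁ y) ∂ν = 1)
    (hg₂1 : ∫⁻ y, ENNReal.ofReal (g₂ y) ∂ν = 1)
    (Iy : ℝ → ENNReal)
    (hIy : ∀ θ, Iy θ = ∫⁻ y, ENNReal.ofReal
        ((g₁ y - g₂ y) ^ 2 / (θ * g₁ y + (1 - θ) * g₂ y)) ∂ν) :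
    (∫⁻ θ in Set.Ioo (0 : ℝ) 1, (Iy θ) ^ ((1 : ℝ) / 2)
        ≤ ∫⁻ θ in Set.Ioo (0 : ℝ) 1,
            ENNReal.ofReal (θ ^ (-(1 : ℝ) / 2) * (1 - θ) ^ (-(1 : ℝ) / 2)))
    ∧ (∫⁻ θ in Set.Ioo (0 : ℝ) 1,
          ENNReal.ofReal (θ ^ (-(1 : ℝ) / 2) * (1 - θ) ^ (-(1 : ℝ) / 2)))
        = ENNReal.ofReal Real.pi
    ∧ ENNReal.ofReal Real.pi < ⊤ := by
  refine ⟨?_, lintegral_Ioo_rpow_neg_half_mul_one_sub_rpow_neg_half, ENNReal.ofReal_lt_top⟩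
  refine setLIntegral_mono' measurableSet_Ioo fun θ ⟨hθ0, hθ1⟩ ↦ ?_
  have hfisher : Iy θ ≤ ENNReal.ofReal θ⁻¹ + ENNReal.ofReal (1 - θ)⁻¹ := by
    simpa only [hIy, hg₁1, hg₂1, mul_one] using
      lintegral_sq_sub_div_mixture_le ν hg₁m hg₁nn hg₂nn hθ0 hθ1
  calc Iy θ ^ ((1 : ℝ) / 2)
      ≤ (ENNReal.ofReal θ⁻¹ + ENNReal.ofReal (1 - θ)⁻¹) ^ ((1 : ℝ) / 2) :=
        ENNReal.rpow_le_rpow hfisher one_half_pos.le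
    _ = _ := rpow_half_ofReal_inv_add_ofReal_inv_one_sub hθ0 hθ1

/-- The Jeffreys prior of the two-component mixture model with known components `g₁, g₂`
is proper: with `I_y(θ) = ∫ (g₁ − g₂)² / (θ g₁ + (1−θ) g₂) dν` (integrand `0` where the
denominator vanishes), one has
`∫₀¹ √(I_y(θ)) dθ ≤ ∫₀¹ θ^(−1/2) (1−θ)^(−1/2) dθ = π < ∞`. -/
theorem two_component_mixture_jeffreys_proper
    {Y : Type*} [MeasurableSpace Y] (ν : Measure Y) [SigmaFinite ν]
    (g₁ g₂ : Y → ℝ) (hg₁m : Measurable g₁) (hg₂m : Measurable g₂)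
    (hg₁nn : ∀ y, 0 ≤ g₁ y) (hg₂nn : ∀ y, 0 ≤ g₂ y)
    (hg₁1 : ∫⁻ y, ENNReal.ofReal (g₁ y) ∂ν = 1)
    (hg₂1 : ∫⁻ y, ENNReal.ofReal (g₂ y) ∂ν = 1)
    (Iy : ℝ → ENNReal)
    (hIy : ∀ θ, Iy θ = ∫⁻ y, ENNReal.ofReal
        ((g₁ y - g₂ y) ^ 2 / (θ * g₁ y + (1 - θ) * g₂ y)) ∂ν) :
    (∫⁻ θ in Set.Ioo (0 : ℝ) 1, (Iy θ) ^ ((1 : ℝ) / 2)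
        ≤ ∫⁻ θ in Set.Ioo (0 : ℝ) 1,
            ENNReal.ofReal (θ ^ (-(1 : ℝ) / 2) * (1 - θ) ^ (-(1 : ℝ) / 2)))
    ∧ (∫⁻ θ in Set.Ioo (0 : ℝ) 1,
          ENNReal.ofReal (θ ^ (-(1 : ℝ) / 2) * (1 - θ) ^ (-(1 : ℝ) / 2)))
        = ENNReal.ofReal Real.pi
    ∧ ENNReal.ofReal Real.pi < ⊤ :=
  two_component_mixture_jeffreys_proper_general ν g₁ g₂ hg₁m hg₁nn hg₂nn hg₁1 hg₂1 Iy hIy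
end

section
/- For θ > 0 define h(θ) = (1/4)[ψ₁(θ/2) − ψ₁((θ+1)/2)] − 1/(2θ) − (θ+2)/(2θ(θ+3)) + 1/(θ+1), where ψ₁ is the trigamma function (second derivative of log Γ). Then h(θ) = O(θ^{−4}) as θ → ∞; that is, there exist constants C > 0 and T > 0 such that h(θ) ≤ C θ^{−4} for all θ ≥ T. -/
open MeasureTheory

/-- The trigamma function `ψ₁ = (log Γ)''`. -/
noncomputable def trigamma (x : ℝ) : ℝ :=
  deriv (deriv fun t => Real.log (Real.Gamma t)) x

/-- The Fisher information about the degrees of freedom `θ` of the standard Student-t model,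
`h(θ) = (1/4)[ψ₁(θ/2) − ψ₁((θ+1)/2)] − 1/(2θ) − (θ+2)/(2θ(θ+3)) + 1/(θ+1)`. -/
noncomputable def studentTFisher (θ : ℝ) : ℝ :=
  (1 / 4) * (trigamma (θ / 2) - trigamma ((θ + 1) / 2))
    - 1 / (2 * θ) - (θ + 2) / (2 * θ * (θ + 3)) + 1 / (θ + 1)

/-! For `x > 0`, `ψ₁ x = ∑ₙ (x + n)⁻²`: both sides satisfy `f x = x⁻² + f (x + 1)`, so their
difference `g` is `1`-periodic, continuous and nonnegative (`ψ₁ ≥ 0` by log-convexity of `Γ`), while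
`∫ₓ^{x+1} ψ₁ = 1/x`; hence `∫ g ≤ 1/(x + N)` over a period for every `N`, and `g = 0`.
With `x = θ/2` the trigamma bracket of `h` becomes `∑ₙ [(x + n)⁻² - (x + ½ + n)⁻²]`. Each term is at
most `M (x + n) - M (x + n + 1)`, where `M t = G t - G (t + ½) + 1/(8t⁴)` and
`G t = 1/t + 1/(2t²) + 1/(6t³)` is the start of the asymptotic expansion of `ψ₁`, so the sum
telescopes to at most `M x`; and `M (θ/2) / 4` minus the rational part of `h` is at most `4/θ⁴`. -/

open Real Set Filter Topology
open scoped ContDiff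

lemma Real.analyticAt_Gamma_of_pos {x : ℝ} (hx : 0 < x) : AnalyticAt ℝ Gamma x := by
  have hℂ : AnalyticAt ℂ Complex.Gamma x := by
    refine Complex.analyticAt_iff_eventually_differentiableAt.mpr ?_
    have hre : {s : ℂ | 0 < s.re} ∈ 𝓝 (x : ℂ) :=
      (isOpen_lt continuous_const Complex.continuous_re).mem_nhds (by simpa using hx)
    filter_upwards [hre] with s hs
    refine Complex.differentiableAt_Gamma s fun m hm => ?_
    have : (0 : ℝ) < -m := by simpa [hm] using hs
    linarith [m.cast_nonneg (α := ℝ)]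
  simpa [Complex.Gamma_ofReal] using hℂ.re_ofReal

local notation "ψ" => deriv fun t : ℝ => Real.log (Real.Gamma t)

lemma contDiffOn_log_Gamma : ContDiffOn ℝ ∞ (fun t => log (Gamma t)) (Ioi 0) := fun _ hx =>
  ((analyticAt_Gamma_of_pos hx).contDiffAt.log (Gamma_pos_of_pos hx).ne').contDiffWithinAt

lemma contDiffOn_deriv_log_Gamma : ContDiffOn ℝ ∞ ψ (Ioi 0) :=
  contDiffOn_log_Gamma.deriv_of_isOpen isOpen_Ioi le_rfl

lemma contDiffOn_trigamma : ContDiffOn ℝ ∞ trigamma (Ioi 0) :=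
  contDiffOn_deriv_log_Gamma.deriv_of_isOpen isOpen_Ioi le_rfl

lemma differentiableAt_log_Gamma {x : ℝ} (hx : 0 < x) :
    DifferentiableAt ℝ (fun t => log (Gamma t)) x :=
  (contDiffOn_log_Gamma.differentiableOn (by simp)).differentiableAt (Ioi_mem_nhds hx)

lemma differentiableAt_deriv_log_Gamma {x : ℝ} (hx : 0 < x) : DifferentiableAt ℝ ψ x :=
  (contDiffOn_deriv_log_Gamma.differentiableOn (by simp)).differentiableAt (Ioi_mem_nhds hx)

lemma deriv_add_one_eq_of_eventually {f g : ℝ → ℝ} {x : ℝ}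
    (h : (fun y => f (y + 1)) =ᶠ[𝓝 x] fun y => f y + g y) (hf : DifferentiableAt ℝ f x)
    (hg : DifferentiableAt ℝ g x) : deriv f (x + 1) = deriv f x + deriv g x := by
  rw [← deriv_comp_add_const, h.deriv_eq, deriv_fun_add hf hg]

lemma deriv_log_Gamma_add_one {x : ℝ} (hx : 0 < x) : ψ (x + 1) = ψ x + x⁻¹ := by
  have hrec : (fun y => log (Gamma (y + 1))) =ᶠ[𝓝 x] fun y => log (Gamma y) + log y := by
    filter_upwards [eventually_gt_nhds hx] with y hy
    rw [Gamma_add_one hy.ne', log_mul hy.ne' (Gamma_pos_of_pos hy).ne', add_comm]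
  rw [deriv_add_one_eq_of_eventually hrec
    (differentiableAt_log_Gamma hx) (differentiableAt_log hx.ne'), deriv_log]

lemma trigamma_add_one {x : ℝ} (hx : 0 < x) : trigamma (x + 1) = trigamma x - (x ^ 2)⁻¹ := by
  have hrec : (fun y => ψ (y + 1)) =ᶠ[𝓝 x] fun y => ψ y + y⁻¹ := by
    filter_upwards [eventually_gt_nhds hx] with y hy using deriv_log_Gamma_add_one hy
  unfold trigamma
  rw [deriv_add_one_eq_of_eventually hrec
    (differentiableAt_deriv_log_Gamma hx) (differentiableAt_inv hx.ne'), deriv_inv]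
  ring

lemma trigamma_nonneg {x : ℝ} (hx : 0 < x) : 0 ≤ trigamma x := by
  have hmono : MonotoneOn ψ (Ioi 0) :=
    convexOn_log_Gamma.monotoneOn_deriv fun _ hy => differentiableAt_log_Gamma hy
  rw [trigamma, ← derivWithin_of_isOpen isOpen_Ioi hx]
  exact hmono.derivWithin_nonneg

lemma integral_trigamma {x : ℝ} (hx : 0 < x) : ∫ t in x..x + 1, trigamma t = x⁻¹ := by
  have hsub : uIcc x (x + 1) ⊆ Ioi 0 := by
    rw [uIcc_of_le (by linarith)]
    exact fun t ht => hx.trans_le ht.1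
  rw [intervalIntegral.integral_eq_sub_of_hasDerivAt (f' := trigamma)
    (fun t ht => (differentiableAt_deriv_log_Gamma (hsub ht)).hasDerivAt)
    ((contDiffOn_trigamma.continuousOn.mono hsub).intervalIntegrable),
    deriv_log_Gamma_add_one hx]
  ring

lemma eq_sum_range_add_of_eq_inv_sq_add {f : ℝ → ℝ}
    (hf : ∀ y, 0 < y → f y = (y ^ 2)⁻¹ + f (y + 1)) {x : ℝ} (hx : 0 < x) (N : ℕ) :
    f x = ∑ n ∈ Finset.range N, ((x + n) ^ 2)⁻¹ + f (x + N) := by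
  induction N with
  | zero => simp
  | succ N ih =>
    rw [ih, hf (x + N) (by positivity), Finset.sum_range_succ]
    push_cast
    ring_nf

lemma trigamma_eq_sum_range_add {x : ℝ} (hx : 0 < x) (N : ℕ) :
    trigamma x = ∑ n ∈ Finset.range N, ((x + n) ^ 2)⁻¹ + trigamma (x + N) :=
  eq_sum_range_add_of_eq_inv_sq_add (fun y hy => by rw [trigamma_add_one hy]; ring) hx N

noncomputable def trigammaSeries (x : ℝ) : ℝ := ∑' n : ℕ, ((x + n) ^ 2)⁻¹

lemma summable_inv_add_nat_sq {x : ℝ} (hx : 0 < x) : Summable fun n : ℕ => ((x + n) ^ 2)⁻¹ := by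
  have h := (Real.summable_one_div_nat_add_rpow x 2).mpr one_lt_two
  refine h.congr fun n => ?_
  rw [abs_of_pos (by positivity), add_comm, one_div, Real.rpow_two]

lemma trigammaSeries_add_one {x : ℝ} (hx : 0 < x) :
    trigammaSeries x = (x ^ 2)⁻¹ + trigammaSeries (x + 1) := by
  rw [trigammaSeries, (summable_inv_add_nat_sq hx).tsum_eq_zero_add, trigammaSeries]
  push_cast
  simp only [add_zero, add_assoc, add_comm (1 : ℝ)]

lemma trigammaSeries_eq_sum_range_add {x : ℝ} (hx : 0 < x) (N : ℕ) :
    trigammaSeries x = ∑ n ∈ Finset.range N, ((x + n) ^ 2)⁻¹ + trigammaSeries (x + N) :=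
  eq_sum_range_add_of_eq_inv_sq_add (fun _ hy => trigammaSeries_add_one hy) hx N

lemma trigammaSeries_nonneg (x : ℝ) : 0 ≤ trigammaSeries x :=
  tsum_nonneg fun _ => by positivity

lemma continuousOn_trigammaSeries {a : ℝ} (ha : 0 < a) : ContinuousOn trigammaSeries (Ici a) := by
  refine continuousOn_tsum (fun n => ?_) (summable_inv_add_nat_sq ha) fun n y hy => ?_
  · exact ContinuousOn.inv₀ (by fun_prop) fun y hy =>
      (pow_pos (by linarith [mem_Ici.mp hy, n.cast_nonneg (α := ℝ)]) 2).ne'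
  · rw [Real.norm_of_nonneg (by positivity)]
    have : a + n ≤ y + n := by linarith [mem_Ici.mp hy]
    gcongr

lemma trigammaSeries_le_trigamma {x : ℝ} (hx : 0 < x) : trigammaSeries x ≤ trigamma x := by
  refine tsum_le_of_sum_range_le (fun n => by positivity) fun N => ?_
  rw [trigamma_eq_sum_range_add hx N]
  linarith [trigamma_nonneg (show 0 < x + N by positivity)]

lemma trigamma_eq_trigammaSeries {x : ℝ} (hx : 0 < x) : trigamma x = trigammaSeries x := by
  set g := fun t => trigamma t - trigammaSeries t with hg
  have hIcc : Icc x (x + 1) ⊆ Ioi 0 := fun t ht => hx.trans_le ht.1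
  have hg_cont : ContinuousOn g (Icc x (x + 1)) :=
    (contDiffOn_trigamma.continuousOn.mono hIcc).sub
      ((continuousOn_trigammaSeries hx).mono fun t ht => ht.1)
  have hg_nonneg : ∀ t, 0 < t → 0 ≤ g t := fun t ht =>
    sub_nonneg.mpr (trigammaSeries_le_trigamma ht)
  -- `g` is `1`-periodic, so `g t = trigamma (t + N) - trigammaSeries (t + N)`.
  have hg_le : ∀ (N : ℕ) t, 0 < t → g t ≤ trigamma (t + N) := fun N t ht => by
    simp only [hg, trigamma_eq_sum_range_add ht N, trigammaSeries_eq_sum_range_add ht N]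
    linarith [trigammaSeries_nonneg (t + N)]
  have hshift_int : ∀ N : ℕ, IntervalIntegrable (fun t => trigamma (t + N)) volume x (x + 1) :=
    fun N => (contDiffOn_trigamma.continuousOn.comp (continuousOn_id.add continuousOn_const)
      fun t ht => show 0 < t + N by positivity [mem_Ioi.mp (hIcc ht)]).intervalIntegrable_of_Icc
        (by linarith)
  have hint_le : ∀ N : ℕ, ∫ t in x..x + 1, g t ≤ (x + N)⁻¹ := fun N =>
    calc ∫ t in x..x + 1, g t ≤ ∫ t in x..x + 1, trigamma (t + N) :=
          intervalIntegral.integral_mono_on (by linarith)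
            (hg_cont.intervalIntegrable_of_Icc (by linarith)) (hshift_int N)
            fun t ht => hg_le N t (hIcc ht)
      _ = (x + N)⁻¹ := by
          rw [intervalIntegral.integral_comp_add_right, add_right_comm,
            integral_trigamma (by positivity)]
  have hint_nonpos : ∫ t in x..x + 1, g t ≤ 0 :=
    ge_of_tendsto' (tendsto_inv_atTop_zero.comp
      (tendsto_atTop_add_const_left _ _ tendsto_natCast_atTop_atTop)) hint_le
  by_contra hne
  have hpos := intervalIntegral.integral_pos (by linarith) hg_cont
    (fun t ht => hg_nonneg t (hx.trans ht.1))
    ⟨x, left_mem_Icc.mpr (by linarith), sub_pos.mpr <|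
      (trigammaSeries_le_trigamma hx).lt_of_ne (Ne.symm hne)⟩
  linarith

lemma tsum_le_of_le_sub_succ {a F : ℕ → ℝ} (ha : ∀ n, 0 ≤ a n) (hF : ∀ n, 0 ≤ F n)
    (h : ∀ n, a n ≤ F n - F (n + 1)) : ∑' n, a n ≤ F 0 :=
  tsum_le_of_sum_range_le ha fun N => by
    linarith [Finset.sum_le_sum fun n (_ : n ∈ Finset.range N) => h n,
      Finset.sum_range_sub' F N, hF N]

noncomputable def trigammaAsymp (t : ℝ) : ℝ := t⁻¹ + (2 * t ^ 2)⁻¹ + (6 * t ^ 3)⁻¹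

noncomputable def halfShiftMajorant (t : ℝ) : ℝ :=
  trigammaAsymp t - trigammaAsymp (t + 1 / 2) + (8 * t ^ 4)⁻¹

lemma halfShiftMajorant_nonneg {t : ℝ} (ht : 0 < t) : 0 ≤ halfShiftMajorant t := by
  have key : halfShiftMajorant t = (1/64 + 11/96*t + 3/8*t^2 + 7/8*t^3 + t^4 + 1/2*t^5)
      / (t^4 * (t + 1/2)^3) := by
    unfold halfShiftMajorant trigammaAsymp
    field_simp
    ring
  rw [key]
  positivity

lemma inv_sq_sub_inv_add_half_sq_le {t : ℝ} (ht : 0 < t) :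
    (t ^ 2)⁻¹ - ((t + 1 / 2) ^ 2)⁻¹ ≤ halfShiftMajorant t - halfShiftMajorant (t + 1) := by
  have key : halfShiftMajorant t - halfShiftMajorant (t + 1) - ((t^2)⁻¹ - ((t + 1/2)^2)⁻¹)
      = (27/512 + 45/64*t + 1017/256*t^2 + 1607/128*t^3 + 4691/192*t^4 + 2929/96*t^5
          + 395/16*t^6 + 101/8*t^7 + 15/4*t^8 + 1/2*t^9)
        / (t^4 * (t + 1/2)^3 * (t + 1)^4 * (t + 3/2)^3) := by
    unfold halfShiftMajorant trigammaAsymp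
    rw [show t + 1 + 1 / 2 = t + 3 / 2 by ring]
    field_simp
    ring
  rw [← sub_nonneg, key]
  positivity

lemma trigammaSeries_sub_add_half_le {x : ℝ} (hx : 0 < x) :
    trigammaSeries x - trigammaSeries (x + 1 / 2) ≤ halfShiftMajorant x := by
  rw [trigammaSeries, trigammaSeries,
    ← (summable_inv_add_nat_sq hx).tsum_sub (summable_inv_add_nat_sq (by positivity))]
  have h := tsum_le_of_le_sub_succ (a := fun n : ℕ => ((x + n) ^ 2)⁻¹ - ((x + 1 / 2 + n) ^ 2)⁻¹)
    (F := fun n : ℕ => halfShiftMajorant (x + n))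
    (fun n => sub_nonneg.mpr (by gcongr; linarith))
    (fun n => halfShiftMajorant_nonneg (by positivity)) fun n => by
      rw [Nat.cast_succ, ← add_assoc, add_right_comm x]
      exact inv_sq_sub_inv_add_half_sq_le (by positivity)
  simpa using h

lemma studentTFisher_le {θ : ℝ} (hθ : 0 < θ) : studentTFisher θ ≤ 4 / θ ^ 4 := by
  have hx : 0 < θ / 2 := by positivity
  have key : 4 / θ ^ 4 - ((1 / 4) * halfShiftMajorant (θ / 2) - 1 / (2 * θ)
        - (θ + 2) / (2 * θ * (θ + 3)) + 1 / (θ + 1))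
      = (21/2 + 34*θ + 223/6*θ^2 + 13*θ^3) / (θ^4 * (θ+1)^3 * (θ+3)) := by
    unfold halfShiftMajorant trigammaAsymp
    field_simp
    ring
  have hrhs : 0 ≤ (21/2 + 34*θ + 223/6*θ^2 + 13*θ^3) / (θ^4 * (θ+1)^3 * (θ+3)) := by positivity
  rw [studentTFisher, trigamma_eq_trigammaSeries hx, show (θ + 1) / 2 = θ / 2 + 1 / 2 by ring,
    trigamma_eq_trigammaSeries (by positivity)]
  linarith [trigammaSeries_sub_add_half_le hx]

/-- `h(θ) = O(θ^(−4))` as `θ → ∞`: there are `C > 0` and `T > 0` with `h(θ) ≤ C θ^(−4)`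
for all `θ ≥ T`. -/
theorem student_t_fisher_asymptotics :
    ∃ C > (0 : ℝ), ∃ T > (0 : ℝ), ∀ θ ≥ T, studentTFisher θ ≤ C / θ ^ 4 :=
  ⟨4, by norm_num, 1, by norm_num, fun _ hθ => studentTFisher_le (by linarith)⟩
end
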